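/- arXiv:1709.01649 — 4 statements merged into one kernel-verified Lean document; each statement's English description precedes it below -/
import Mathlib

section
/- Let A be a unital C*-algebra and let S ⊂ A be an operator system. If a state ψ on A is S-peaking, then ψ is a pure state and ψ has the unique extension property with respect to S. -/
open Filter Topology
open scoped ComplexOrder

/-- A state on a unital C⋆-algebra: a positive linear functional of norm one. -/
def IsState {A : Type*} [CStarAlgebra A] (φ : A →L[ℂ] ℂ) : Prop :=
  ‖φ‖ = 1 ∧ ∀ a : A, 0 ≤ φ (star a * a)

/-- A pure state: an extreme point of the state space. -/
def IsPureState {A : Type*} [CStarAlgebra A] (ψ : A →L[ℂ] ℂ) : Prop :=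
  IsState ψ ∧ ∀ (φ₁ φ₂ : A →L[ℂ] ℂ) (t : ℝ), IsState φ₁ → IsState φ₂ →
    0 < t → t < 1 → ψ = (t : ℂ) • φ₁ + ((1 - t : ℝ) : ℂ) • φ₂ → φ₁ = ψ ∧ φ₂ = ψ

/-- A state `ψ` is `S`-peaking if there is a self-adjoint `s ∈ S` of norm one with
`ψ s = 1` and `|φ s| < 1` for every state `φ ≠ ψ`. -/
def IsSPeaking {A : Type*} [CStarAlgebra A] (S : Submodule ℂ A) (ψ : A →L[ℂ] ℂ) : Prop :=
  ∃ s ∈ S, IsSelfAdjoint s ∧ ‖s‖ = 1 ∧ ψ s = 1 ∧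
    ∀ φ : A →L[ℂ] ℂ, IsState φ → φ ≠ ψ → ‖φ s‖ < 1

/-- The unique extension property of a state with respect to an operator system. -/
def HasUEP {A : Type*} [CStarAlgebra A] (S : Submodule ℂ A) (ψ : A →L[ℂ] ℂ) : Prop :=
  ∀ φ : A →L[ℂ] ℂ, IsState φ → (∀ s ∈ S, φ s = ψ s) → φ = ψ

/-! A peaking state is the only state at which its peak element `s` attains modulus one.
A convex combination of values in the closed unit disc, one of them in the open disc, stays in
the open disc; so if `ψ = t φ₁ + (1 - t) φ₂` then `1 = ψ s` forces `|φ₁ s| = |φ₂ s| = 1`, whence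
`φ₁ = φ₂ = ψ`. Likewise a state agreeing with `ψ` on `S` takes the value `1` at `s`. -/

theorem norm_smul_add_smul_lt_one {E : Type*} [SeminormedAddCommGroup E] [NormedSpace ℝ E]
    {x y : E} {t : ℝ} (hx : ‖x‖ < 1) (hy : ‖y‖ ≤ 1) (ht₀ : 0 < t) (ht₁ : t ≤ 1) :
    ‖t • x + (1 - t) • y‖ < 1 :=
  calc ‖t • x + (1 - t) • y‖ ≤ t * ‖x‖ + (1 - t) * ‖y‖ := by
        refine (norm_add_le _ _).trans_eq ?_
        rw [norm_smul_of_nonneg ht₀.le, norm_smul_of_nonneg (sub_nonneg.2 ht₁)]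
    _ < t * 1 + (1 - t) * 1 :=
        add_lt_add_of_lt_of_le (mul_lt_mul_of_pos_left hx ht₀)
          (mul_le_mul_of_nonneg_left hy (sub_nonneg.2 ht₁))
    _ = 1 := by ring

section Peaking

variable {A : Type*} [CStarAlgebra A] {ψ φ φ₁ φ₂ : A →L[ℂ] ℂ} {s : A}

theorem IsState.norm_apply_le (hφ : IsState φ) (a : A) : ‖φ a‖ ≤ ‖a‖ := by
  simpa [hφ.1] using φ.le_opNorm a

theorem eq_of_one_le_norm_apply_of_peak (hpeak : ∀ φ, IsState φ → φ ≠ ψ → ‖φ s‖ < 1)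
    (hφ : IsState φ) (h : 1 ≤ ‖φ s‖) : φ = ψ :=
  by_contra fun hne ↦ (hpeak φ hφ hne).not_ge h

theorem eq_of_combo_apply_eq_one_of_peak (hs : ‖s‖ ≤ 1)
    (hpeak : ∀ φ, IsState φ → φ ≠ ψ → ‖φ s‖ < 1) (h₁ : IsState φ₁) (h₂ : IsState φ₂)
    {t : ℝ} (ht₀ : 0 < t) (ht₁ : t ≤ 1) (h : (t : ℂ) * φ₁ s + ((1 - t : ℝ) : ℂ) * φ₂ s = 1) :
    φ₁ = ψ := by
  refine eq_of_one_le_norm_apply_of_peak hpeak h₁ (not_lt.1 fun hlt ↦ ?_)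
  have hcombo := norm_smul_add_smul_lt_one hlt ((h₂.norm_apply_le s).trans hs) ht₀ ht₁
  rw [Complex.real_smul, Complex.real_smul, h, norm_one] at hcombo
  exact lt_irrefl _ hcombo

end Peaking

theorem stmt0_general {A : Type*} [CStarAlgebra A]
    (S : Submodule ℂ A)
    (ψ : A →L[ℂ] ℂ) (hψ : IsState ψ) (hpeak : IsSPeaking S ψ) :
    IsPureState ψ ∧ HasUEP S ψ := by
  obtain ⟨s, hsS, -, hs, hψs, hlt⟩ := hpeak
  refine ⟨⟨hψ, fun φ₁ φ₂ t h₁ h₂ ht₀ ht₁ hcombo ↦ ?_⟩, fun φ hφ hagree ↦ ?_⟩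
  · have h : (t : ℂ) * φ₁ s + ((1 - t : ℝ) : ℂ) * φ₂ s = 1 := by
      simpa [hψs] using (congrArg (· s) hcombo).symm
    refine ⟨eq_of_combo_apply_eq_one_of_peak hs.le hlt h₁ h₂ ht₀ ht₁.le h,
      eq_of_combo_apply_eq_one_of_peak hs.le hlt h₂ h₁ (t := 1 - t) (by linarith) (by linarith) ?_⟩
    rw [← h]
    push_cast
    ring
  · exact eq_of_one_le_norm_apply_of_peak hlt hφ (by rw [hagree s hsS, hψs, norm_one])

/-- an `S`-peaking state is pure and has the unique extension property
with respect to `S`. -/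
theorem stmt0 {A : Type*} [CStarAlgebra A]
    (S : Submodule ℂ A) (hS1 : (1 : A) ∈ S) (hSstar : ∀ x ∈ S, star x ∈ S)
    (ψ : A →L[ℂ] ℂ) (hψ : IsState ψ) (hpeak : IsSPeaking S ψ) :
    IsPureState ψ ∧ HasUEP S ψ :=
  stmt0_general S ψ hψ hpeak
end

section
/- Let A be a unital C*-algebra and let S ⊂ A be an operator system. Let ψ be a state on A which is S-peaking, and let (σ_ψ, H_ψ, ξ_ψ) be a GNS triple for ψ. Then σ_ψ is an S-peaking representation: there exists s ∈ S such that ‖σ_ψ(s)‖ > ‖ρ(s)‖ for every unital *-representation ρ of A for which it is not the case that ‖σ_ψ(a)‖ ≤ ‖ρ(a)‖ for all a ∈ A. -/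
/-!
Since `ψ s = 1` we have `‖σ s‖ = 1`, while `‖ρ s‖ ≤ ‖s‖ = 1`. If `‖ρ s‖ = 1`, a character of
`C⋆(ρ s)` at a spectral value of modulus one extends (Hahn–Banach) to a unital contractive
functional `g` on `B(K)`; such functionals are positive, so `g ∘ ρ` is a state with
`|g (ρ s)| = 1`, and the peaking property forces `g ∘ ρ = ψ`. Then
`‖σ a (σ b ξ)‖² = g (ρ b⋆ ρ a⋆ ρ a ρ b) ≤ ‖ρ a‖² ‖σ b ξ‖²`, and cyclicity of `ξ` gives
`‖σ a‖ ≤ ‖ρ a‖` for every `a`.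
-/

open Filter Topology
open scoped ComplexOrder InnerProductSpace

section UnitalContraction

variable {B : Type*} [CStarAlgebra B] [Nontrivial B] {g : B →L[ℂ] ℂ}

theorem IsSelfAdjoint.norm_add_smul_I_sq_le {b : B} (hb : IsSelfAdjoint b) (t : ℝ) :
    ‖b + (t * Complex.I) • (1 : B)‖ ^ 2 ≤ ‖b‖ ^ 2 + t ^ 2 := by
  have hstar_mul : star (b + (t * Complex.I) • (1 : B)) * (b + (t * Complex.I) • 1) =
      b * b + (t ^ 2 : ℂ) • 1 := by
    simp only [star_add, star_smul, hb.star_eq, star_one, add_mul, mul_add, smul_mul_assoc,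
      mul_smul_comm, one_mul, mul_one, smul_add, smul_smul, Complex.star_def, map_mul,
      Complex.conj_ofReal, Complex.conj_I]
    have hI : (t * Complex.I) * (t * -Complex.I) = t ^ 2 := by ring_nf; simp
    rw [hI]
    module
  calc ‖b + (t * Complex.I) • (1 : B)‖ ^ 2 = ‖b * b + (t ^ 2 : ℂ) • (1 : B)‖ := by
        rw [sq, ← CStarRing.norm_star_mul_self, hstar_mul]
    _ ≤ ‖b * b‖ + ‖(t ^ 2 : ℂ) • (1 : B)‖ := norm_add_le _ _
    _ ≤ ‖b‖ ^ 2 + t ^ 2 := by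
        rw [norm_smul, norm_one, mul_one, ← Complex.ofReal_pow,
          Complex.norm_of_nonneg (by positivity)]
        gcongr
        exact (norm_mul_le b b).trans_eq (sq _).symm

theorem im_apply_eq_zero_of_isSelfAdjoint (hg : ‖g‖ ≤ 1) (hg1 : g 1 = 1) {b : B}
    (hb : IsSelfAdjoint b) : (g b).im = 0 := by
  have key (t : ℝ) : (g b).re ^ 2 + ((g b).im + t) ^ 2 ≤ ‖b‖ ^ 2 + t ^ 2 := by
    have happly : g (b + (t * Complex.I) • 1) = ⟨(g b).re, (g b).im + t⟩ := by
      apply Complex.ext <;> simp [hg1]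
    calc (g b).re ^ 2 + ((g b).im + t) ^ 2 = ‖g (b + (t * Complex.I) • 1)‖ ^ 2 := by
          rw [happly, Complex.sq_norm, Complex.normSq_mk]; ring
      _ ≤ ‖b + (t * Complex.I) • (1 : B)‖ ^ 2 := by
          gcongr
          exact g.le_of_opNorm_le hg _ |>.trans_eq (one_mul _)
      _ ≤ ‖b‖ ^ 2 + t ^ 2 := hb.norm_add_smul_I_sq_le t
  by_contra him
  have ht : 2 * (g b).im * ((‖b‖ ^ 2 + 1) / (2 * (g b).im)) = ‖b‖ ^ 2 + 1 :=
    mul_div_cancel₀ _ (mul_ne_zero two_ne_zero him)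
  nlinarith [key ((‖b‖ ^ 2 + 1) / (2 * (g b).im)), sq_nonneg (g b).re]

theorem apply_nonneg_of_nonneg [PartialOrder B] [StarOrderedRing B] (hg : ‖g‖ ≤ 1)
    (hg1 : g 1 = 1) {a : B} (ha : 0 ≤ a) : 0 ≤ g a := by
  have him := im_apply_eq_zero_of_isSelfAdjoint hg hg1 ha.isSelfAdjoint
  have hle : algebraMap ℝ B ‖a‖ - a ≤ algebraMap ℝ B ‖a‖ := sub_le_self _ ha
  have hnorm : ‖algebraMap ℝ B ‖a‖ - a‖ ≤ ‖a‖ := by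
    refine (CStarAlgebra.norm_le_norm_of_nonneg_of_le ?_ hle).trans_eq ?_
    · exact sub_nonneg.2 ha.isSelfAdjoint.le_algebraMap_norm_self
    · simp
  have happly : g (algebraMap ℝ B ‖a‖ - a) = ((‖a‖ - (g a).re : ℝ) : ℂ) := by
    apply Complex.ext <;> simp [Algebra.algebraMap_eq_smul_one, hg1, him]
  have : |‖a‖ - (g a).re| ≤ ‖a‖ := by
    have := (g.le_of_opNorm_le hg (algebraMap ℝ B ‖a‖ - a)).trans_eq (one_mul _) |>.trans hnorm
    rwa [happly, Complex.norm_real, Real.norm_eq_abs] at this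
  rw [Complex.nonneg_iff]
  exact ⟨by linarith [(abs_le.1 this).2], him.symm⟩

theorem isState_of_norm_le_one_of_map_one (hg : ‖g‖ ≤ 1) (hg1 : g 1 = 1) : IsState g := by
  let := CStarAlgebra.spectralOrder B
  let := CStarAlgebra.spectralOrderedRing B
  refine ⟨le_antisymm hg ?_, fun a ↦ apply_nonneg_of_nonneg hg hg1 (star_mul_self_nonneg a)⟩
  simpa [hg1] using g.le_opNorm 1

end UnitalContraction

theorem exists_isState_apply_eq_comp {A B : Type*} [CStarAlgebra A] [Nontrivial A]
    [CStarAlgebra B] {g : B →L[ℂ] ℂ} (hg : ‖g‖ ≤ 1) (hg1 : g 1 = 1) (ρ : A →⋆ₐ[ℂ] B) :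
    ∃ φ : A →L[ℂ] ℂ, IsState φ ∧ ∀ a, φ a = g (ρ a) := by
  have hbound (a : A) : ‖g (ρ a)‖ ≤ 1 * ‖a‖ :=
    (g.le_of_opNorm_le hg _).trans (by gcongr; exact NonUnitalStarAlgHom.norm_apply_le ρ a)
  let φ := (g.toLinearMap ∘ₗ ρ.toAlgHom.toLinearMap).mkContinuous 1 hbound
  refine ⟨φ, isState_of_norm_le_one_of_map_one
    (LinearMap.mkContinuous_norm_le _ zero_le_one _) ?_, fun _ ↦ rfl⟩
  change g (ρ 1) = 1
  rw [map_one, hg1]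

theorem exists_norm_le_one_map_one_norm_apply_eq {B : Type*} [CStarAlgebra B] [Nontrivial B]
    (t : B) [IsStarNormal t] : ∃ g : B →L[ℂ] ℂ, ‖g‖ ≤ 1 ∧ g 1 = 1 ∧ ‖g t‖ = ‖t‖ := by
  obtain ⟨z, hz, hz_norm⟩ := spectrum.exists_nnnorm_eq_spectralRadius t
  rw [IsStarNormal.spectralRadius_eq_nnnorm, ENNReal.coe_inj] at hz_norm
  let E := StarAlgebra.elemental ℂ t
  have htE : t ∈ E := StarAlgebra.elemental.self_mem ℂ t
  have : IsClosed (E : Set B) := StarAlgebra.elemental.isClosed ℂ t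
  obtain ⟨ω, hω⟩ := WeakDual.CharacterSpace.mem_spectrum_iff_exists.mp
    (by rwa [StarSubalgebra.spectrum_eq E] : z ∈ spectrum ℂ (⟨t, htE⟩ : E))
  let f : StrongDual ℂ (Subalgebra.toSubmodule E.toSubalgebra) := (ω : WeakDual ℂ E).toStrongDual
  obtain ⟨g, hgf, hgnorm⟩ := exists_extension_norm_eq _ f
  refine ⟨g, ?_, (hgf ⟨1, one_mem E⟩).trans (map_one ω), ?_⟩
  · rw [hgnorm]
    exact ContinuousLinearMap.opNorm_le_bound _ zero_le_one fun v ↦ by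
      rw [one_mul]
      exact spectrum.norm_le_norm_of_mem (A := E)
        (WeakDual.CharacterSpace.apply_mem_spectrum ω v)
  · rw [(hgf ⟨t, htE⟩).trans hω]
    exact congrArg NNReal.toReal hz_norm

section CyclicRepresentation

variable {A B H : Type*} [Semiring A] [StarRing A] [Algebra ℂ A] [CStarAlgebra B]
  [NormedAddCommGroup H] [InnerProductSpace ℂ H] [CompleteSpace H]

theorem norm_sq_apply_eq_inner (σ : A →⋆ₐ[ℂ] (H →L[ℂ] H)) (ξ : H) (c : A) :
    ((‖σ c ξ‖ ^ 2 : ℝ) : ℂ) = ⟪ξ, σ (star c * c) ξ⟫_ℂ := by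
  rw [map_mul, map_star, mul_apply_eq_comp, ContinuousLinearMap.star_eq_adjoint,
    ContinuousLinearMap.adjoint_inner_right, inner_self_eq_norm_sq_to_K]
  norm_cast

theorem PositiveLinearMap.apply_star_mul_self_mul_le [PartialOrder B] [StarOrderedRing B]
    (g : B →ₚ[ℂ] ℂ) (x y : B) :
    g (star (x * y) * (x * y)) ≤ ((‖x‖ ^ 2 : ℝ) : ℂ) * g (star y * y) := by
  have h : star (x * y) * (x * y) ≤ ‖star x * x‖ • (star y * y) := by
    simpa only [star_mul, mul_assoc] using
      CStarAlgebra.star_left_conjugate_le_norm_smul (a := y) (b := star x * x)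
  calc g (star (x * y) * (x * y)) ≤ g (‖star x * x‖ • (star y * y)) := OrderHomClass.mono g h
    _ = _ := by rw [map_smul_of_tower, CStarRing.norm_star_mul_self, ← sq]; simp

theorem norm_apply_le_of_inner_apply_eq [PartialOrder B] [StarOrderedRing B]
    (σ : A →⋆ₐ[ℂ] (H →L[ℂ] H)) {ξ : H} (hξ : Dense (Set.range fun a : A => σ a ξ))
    (ρ : A →⋆ₐ[ℂ] B) (g : B →ₚ[ℂ] ℂ) (hg : ∀ a, ⟪ξ, σ a ξ⟫_ℂ = g (ρ a)) (a : A) :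
    ‖σ a‖ ≤ ‖ρ a‖ := by
  have hbound (b : A) : ‖σ a (σ b ξ)‖ ≤ ‖ρ a‖ * ‖σ b ξ‖ := by
    have h : ((‖σ a (σ b ξ)‖ ^ 2 : ℝ) : ℂ) ≤ (((‖ρ a‖ * ‖σ b ξ‖) ^ 2 : ℝ) : ℂ) := by
      calc ((‖σ a (σ b ξ)‖ ^ 2 : ℝ) : ℂ) = g (star (ρ a * ρ b) * (ρ a * ρ b)) := by
            rw [← mul_apply_eq_comp, ← map_mul, norm_sq_apply_eq_inner, hg,
              map_mul ρ, map_star ρ, map_mul ρ]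
        _ ≤ ((‖ρ a‖ ^ 2 : ℝ) : ℂ) * g (star (ρ b) * ρ b) := g.apply_star_mul_self_mul_le _ _
        _ = (((‖ρ a‖ * ‖σ b ξ‖) ^ 2 : ℝ) : ℂ) := by
            rw [← map_star, ← map_mul, ← hg, ← norm_sq_apply_eq_inner, mul_pow]
            push_cast; ring
    exact (pow_le_pow_iff_left₀ (norm_nonneg _) (by positivity) two_ne_zero).1
      (Complex.real_le_real.1 h)
  have hclosed : IsClosed {v : H | ‖σ a v‖ ≤ ‖ρ a‖ * ‖v‖} :=
    isClosed_le (continuous_norm.comp (σ a).continuous) (continuous_const.mul continuous_norm)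
  refine (σ a).opNorm_le_bound (norm_nonneg _) fun v ↦ ?_
  exact hclosed.closure_subset_iff.2 (Set.range_subset_iff.2 hbound) (hξ v)

end CyclicRepresentation

theorem stmt3_general {A : Type*} [CStarAlgebra A]
    (S : Submodule ℂ A)
    (ψ : A →L[ℂ] ℂ) (hpeak : IsSPeaking S ψ)
    (Hψ : Type*) [NormedAddCommGroup Hψ] [InnerProductSpace ℂ Hψ] [CompleteSpace Hψ]
    (σ : A →⋆ₐ[ℂ] (Hψ →L[ℂ] Hψ)) (ξ : Hψ) (hξ : ‖ξ‖ = 1)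
    (hcyclic : Dense (Set.range fun a : A => σ a ξ))
    (hGNS : ∀ a : A, ψ a = ⟪ξ, σ a ξ⟫_ℂ) :
    ∃ s ∈ S, ∀ (K : Type*) [NormedAddCommGroup K] [InnerProductSpace ℂ K] [CompleteSpace K]
      (ρ : A →⋆ₐ[ℂ] (K →L[ℂ] K)),
      ¬ (∀ a : A, ‖σ a‖ ≤ ‖ρ a‖) → ‖ρ s‖ < ‖σ s‖ := by
  obtain ⟨s, hsS, hsa, hs1, hψs, hpeak⟩ := hpeak
  refine ⟨s, hsS, fun K _ _ _ ρ hnot ↦ ?_⟩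
  have hσs : 1 ≤ ‖σ s‖ := calc
    1 = ‖⟪ξ, σ s ξ⟫_ℂ‖ := by rw [← hGNS, hψs, norm_one]
    _ ≤ ‖ξ‖ * (‖σ s‖ * ‖ξ‖) :=
      (norm_inner_le_norm _ _).trans (by gcongr; exact (σ s).le_opNorm ξ)
    _ = ‖σ s‖ := by rw [hξ, one_mul, mul_one]
  by_contra! hρσ
  have hρs : ‖ρ s‖ = 1 :=
    le_antisymm (hs1 ▸ NonUnitalStarAlgHom.norm_apply_le ρ s) (hσs.trans hρσ)
  have : Nontrivial A := nontrivial_of_ne s 0 (by rintro rfl; simp at hs1)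
  have : Nontrivial (K →L[ℂ] K) := nontrivial_of_ne (ρ s) 0 (by intro h; simp [h] at hρs)
  have : IsStarNormal (ρ s) := (hsa.map ρ).isStarNormal
  obtain ⟨g, hg, hg1, hgs⟩ := exists_norm_le_one_map_one_norm_apply_eq (ρ s)
  obtain ⟨φ, hφ, hφg⟩ := exists_isState_apply_eq_comp hg hg1 ρ
  have hφψ : φ = ψ := by
    by_contra hne
    exact (hpeak φ hφ hne).ne (by rw [hφg, hgs, hρs])
  refine hnot (norm_apply_le_of_inner_apply_eq σ hcyclic ρ
    (PositiveLinearMap.mk₀ g.toLinearMap fun _ ↦ apply_nonneg_of_nonneg hg hg1) fun a ↦ ?_)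
  rw [← hGNS, ← hφψ, hφg]
  rfl

/-- if a state `ψ` is `S`-peaking, then its GNS representation `σ` is an
`S`-peaking representation: there is `s ∈ S` with `‖σ s‖ > ‖ρ s‖` for every unital
*-representation `ρ` of `A` such that `σ ⊀ ρ`, i.e. such that it is not the case that
`‖σ a‖ ≤ ‖ρ a‖` for all `a`. -/
theorem stmt3 {A : Type*} [CStarAlgebra A]
    (S : Submodule ℂ A) (hS1 : (1 : A) ∈ S) (hSstar : ∀ x ∈ S, star x ∈ S)
    (ψ : A →L[ℂ] ℂ) (hψ : IsState ψ) (hpeak : IsSPeaking S ψ)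
    (Hψ : Type*) [NormedAddCommGroup Hψ] [InnerProductSpace ℂ Hψ] [CompleteSpace Hψ]
    (σ : A →⋆ₐ[ℂ] (Hψ →L[ℂ] Hψ)) (ξ : Hψ) (hξ : ‖ξ‖ = 1)
    (hcyclic : Dense (Set.range fun a : A => σ a ξ))
    (hGNS : ∀ a : A, ψ a = ⟪ξ, σ a ξ⟫_ℂ) :
    ∃ s ∈ S, ∀ (K : Type*) [NormedAddCommGroup K] [InnerProductSpace ℂ K] [CompleteSpace K]
      (ρ : A →⋆ₐ[ℂ] (K →L[ℂ] K)),
      ¬ (∀ a : A, ‖σ a‖ ≤ ‖ρ a‖) → ‖ρ s‖ < ‖σ s‖ :=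
  stmt3_general S ψ hpeak Hψ σ ξ hξ hcyclic hGNS
end

section
/- Let A be a unital C*-algebra and let φ, ψ be states on A. Assume that (Δ_n) is a characteristic sequence for ψ and that lim_{n→∞} |φ(Δ_n)| = 1. Then φ(a) = lim_{n→∞} φ(Δ_n* a Δ_n) for every a ∈ A, and φ = ψ. -/
/-!
Write `λ = φ (Δ n)`. In the GNS seminorm of `φ`, the vector `Δ n - λ • 1` has square
`φ (Δ n⋆ Δ n) - |λ|² ≤ 1 - |λ|² → 0`; by Cauchy–Schwarz this forces
`φ (Δ n⋆ a Δ n) - |λ|² φ a → 0`, which is the first claim. Consequently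
`|φ a| ≤ limsup ‖Δ n⋆ a Δ n‖ ≤ |ψ a|`, so `ker ψ ⊆ ker φ`, and as `φ 1 = ψ 1 = 1` the two
states coincide.
-/

open Filter Topology
open scoped ComplexOrder

/-- A characteristic sequence for a state `ψ`: a sequence of norm-one elements with
`ψ (Δ n) → 1` and `limsup ‖Δ n⋆ * a * Δ n‖ ≤ |ψ a|` for every `a`. -/
def IsCharacteristicSequence {A : Type*} [CStarAlgebra A] (ψ : A →L[ℂ] ℂ) (Δ : ℕ → A) : Prop :=
  (∀ n, ‖Δ n‖ = 1) ∧ Tendsto (fun n => ψ (Δ n)) atTop (nhds 1) ∧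
    ∀ a : A, limsup (fun n => ‖star (Δ n) * a * Δ n‖) atTop ≤ ‖ψ a‖

section PositiveFunctional

variable {A : Type*} [NonUnitalRing A] [StarRing A] [Module ℂ A] [IsScalarTower ℂ A A]
  [SMulCommClass ℂ A A] [StarModule ℂ A] {F : Type*} [FunLike F A ℂ] [LinearMapClass F ℂ A ℂ]
  {φ : F}

lemma conj_apply_star_mul (hpos : ∀ a : A, 0 ≤ φ (star a * a)) (x y : A) :
    starRingEnd ℂ (φ (star y * x)) = φ (star x * y) := by
  have him : ∀ z : A, (φ (star z * z)).im = 0 := fun z => (Complex.nonneg_iff.mp (hpos z)).2.symm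
  have h_im : (φ (star x * y)).im + (φ (star y * x)).im = 0 := by
    have h := him (x + y)
    simp only [star_add, add_mul, mul_add, map_add, Complex.add_im, him x, him y] at h
    linarith
  have h_re : (φ (star x * y)).re = (φ (star y * x)).re := by
    have h := him (x + Complex.I • y)
    simp only [star_add, star_smul, add_mul, mul_add, smul_mul_assoc, mul_smul_comm,
      map_add, map_smul, smul_eq_mul, Complex.add_im, Complex.mul_im, Complex.mul_re,
      Complex.star_def, Complex.conj_I, Complex.I_re, Complex.I_im, Complex.neg_re,
      Complex.neg_im, him x, him y] at h
    linarith
  apply Complex.ext <;> simp only [Complex.conj_re, Complex.conj_im] <;> linarith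

noncomputable abbrev preInnerProductCoreOfNonneg (hpos : ∀ a : A, 0 ≤ φ (star a * a)) :
    PreInnerProductSpace.Core ℂ A where
  inner x y := φ (star x * y)
  conj_inner_symm x y := conj_apply_star_mul hpos x y
  re_inner_nonneg x := (Complex.nonneg_iff.mp (hpos x)).1
  add_left x y z := by simp only [star_add, add_mul, map_add]
  smul_left x y r := by simp only [star_smul, smul_mul_assoc, map_smul, smul_eq_mul]; rfl

lemma norm_apply_star_mul_le (hpos : ∀ a : A, 0 ≤ φ (star a * a)) (x y : A) :
    ‖φ (star x * y)‖ ≤ √(φ (star x * x)).re * √(φ (star y * y)).re :=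
  letI := preInnerProductCoreOfNonneg hpos
  InnerProductSpace.Core.norm_inner_le_norm x y

end PositiveFunctional

namespace IsState

variable {A : Type*} [CStarAlgebra A] {φ : A →L[ℂ] ℂ}

lemma norm_apply_le_s4 (hφ : IsState φ) (a : A) : ‖φ a‖ ≤ ‖a‖ := by
  simpa [hφ.1] using φ.le_opNorm a

lemma re_apply_star_mul_self_le (hφ : IsState φ) (a : A) : (φ (star a * a)).re ≤ ‖a‖ ^ 2 := by
  rw [sq, ← CStarRing.norm_star_mul_self]
  exact (Complex.re_le_norm _).trans (hφ.norm_apply_le_s4 _)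

lemma sqrt_re_apply_star_mul_self_le (hφ : IsState φ) (a : A) :
    √(φ (star a * a)).re ≤ ‖a‖ :=
  (Real.sqrt_le_left (norm_nonneg a)).mpr (hφ.re_apply_star_mul_self_le a)

lemma apply_star (hφ : IsState φ) (a : A) : φ (star a) = starRingEnd ℂ (φ a) := by
  simpa using (conj_apply_star_mul hφ.2 a 1).symm

lemma nontrivial (hφ : IsState φ) : Nontrivial A := by
  by_contra h
  rw [not_nontrivial_iff_subsingleton] at h
  simpa [Subsingleton.elim φ 0] using hφ.1

lemma apply_one (hφ : IsState φ) : φ 1 = 1 := by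
  have := hφ.nontrivial
  have hpos : 0 ≤ φ 1 := by simpa using hφ.2 1
  have hbound : ∀ a, ‖φ a‖ ≤ √(φ 1).re * ‖a‖ := fun a => by
    simpa using (norm_apply_star_mul_le hφ.2 1 a).trans
      (mul_le_mul_of_nonneg_left (hφ.sqrt_re_apply_star_mul_self_le a) (Real.sqrt_nonneg _))
  have hge : 1 ≤ √(φ 1).re := hφ.1 ▸ φ.opNorm_le_bound (Real.sqrt_nonneg _) hbound
  have hle : (φ 1).re ≤ 1 := (Complex.re_le_norm _).trans ((hφ.norm_apply_le_s4 1).trans_eq norm_one)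
  rw [Real.one_le_sqrt] at hge
  apply Complex.ext
  · simp only [Complex.one_re]; linarith
  · exact (Complex.nonneg_iff.mp hpos).2.symm

lemma apply_star_sub_mul_sub (hφ : IsState φ) (x : A) :
    φ (star (x - φ x • 1) * (x - φ x • 1)) = φ (star x * x) - (‖φ x‖ ^ 2 : ℝ) := by
  have hexpand : star (x - φ x • 1) * (x - φ x • 1) = star x * x - φ x • star x
      - starRingEnd ℂ (φ x) • x + (φ x * starRingEnd ℂ (φ x)) • (1 : A) := by
    simp only [star_sub, star_smul, star_one, sub_mul, mul_sub, smul_sub, smul_mul_assoc,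
      mul_smul_comm, smul_smul, mul_one, one_mul, Complex.star_def]
    abel
  rw [hexpand, Complex.ofReal_pow, ← Complex.mul_conj']
  simp only [map_add, map_sub, map_smul, smul_eq_mul, hφ.apply_star, hφ.apply_one, mul_one]
  ring

lemma norm_apply_star_mul_mul_sub_le (hφ : IsState φ) {x : A} (hx : ‖x‖ ≤ 1) (a : A) :
    ‖φ (star x * a * x) - (‖φ x‖ ^ 2 : ℝ) * φ a‖ ≤ 2 * ‖a‖ * √(1 - ‖φ x‖ ^ 2) := by
  set X := x - φ x • 1
  have hdecomp : star x * a * x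
      = star X * (a * x) + starRingEnd ℂ (φ x) • (a * X) + (starRingEnd ℂ (φ x) * φ x) • a := by
    simp only [X, star_sub, star_smul, star_one, sub_mul, mul_sub, smul_sub, smul_mul_assoc,
      mul_smul_comm, smul_smul, mul_one, one_mul, mul_assoc, Complex.star_def]
    abel
  have hX : √(φ (star X * X)).re ≤ √(1 - ‖φ x‖ ^ 2) := by
    refine Real.sqrt_le_sqrt ?_
    rw [hφ.apply_star_sub_mul_sub, Complex.sub_re, Complex.ofReal_re]
    linarith [hφ.re_apply_star_mul_self_le x, pow_le_one₀ (norm_nonneg x) hx (n := 2)]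
  have h₁ : ‖φ (star X * (a * x))‖ ≤ √(1 - ‖φ x‖ ^ 2) * ‖a‖ := by
    have hax : ‖a * x‖ ≤ ‖a‖ := (norm_mul_le a x).trans (mul_le_of_le_one_right (norm_nonneg a) hx)
    refine (norm_apply_star_mul_le hφ.2 X (a * x)).trans ?_
    gcongr
    exact (hφ.sqrt_re_apply_star_mul_self_le _).trans hax
  have h₂ : ‖φ (a * X)‖ ≤ ‖a‖ * √(1 - ‖φ x‖ ^ 2) := by
    rw [← star_star a, norm_star]
    refine (norm_apply_star_mul_le hφ.2 (star a) X).trans ?_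
    gcongr
    exact hφ.sqrt_re_apply_star_mul_self_le _
  rw [hdecomp, Complex.ofReal_pow, ← Complex.conj_mul']
  simp only [map_add, map_smul, smul_eq_mul, add_sub_cancel_right]
  calc ‖φ (star X * (a * x)) + starRingEnd ℂ (φ x) * φ (a * X)‖
      ≤ ‖φ (star X * (a * x))‖ + ‖φ x‖ * ‖φ (a * X)‖ := by
        rw [← Complex.norm_conj (φ x), ← norm_mul]
        exact norm_add_le _ _
    _ ≤ √(1 - ‖φ x‖ ^ 2) * ‖a‖ + 1 * (‖a‖ * √(1 - ‖φ x‖ ^ 2)) := by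
        gcongr
        exact (hφ.norm_apply_le_s4 x).trans hx
    _ = 2 * ‖a‖ * √(1 - ‖φ x‖ ^ 2) := by ring

lemma tendsto_apply_star_mul_mul (hφ : IsState φ) {Δ : ℕ → A} (hΔ : ∀ n, ‖Δ n‖ ≤ 1)
    (h : Tendsto (fun n => ‖φ (Δ n)‖) atTop (𝓝 1)) (a : A) :
    Tendsto (fun n => φ (star (Δ n) * a * Δ n)) atTop (𝓝 (φ a)) := by
  have hsq : Tendsto (fun n => ‖φ (Δ n)‖ ^ 2) atTop (𝓝 1) := by simpa using h.pow 2
  have hbound : Tendsto (fun n => 2 * ‖a‖ * √(1 - ‖φ (Δ n)‖ ^ 2)) atTop (𝓝 0) := by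
    simpa using (((tendsto_const_nhds (x := (1 : ℝ))).sub hsq).sqrt).const_mul (2 * ‖a‖)
  have herr : Tendsto (fun n => φ (star (Δ n) * a * Δ n) - (‖φ (Δ n)‖ ^ 2 : ℝ) * φ a)
      atTop (𝓝 0) :=
    squeeze_zero_norm (fun n => hφ.norm_apply_star_mul_mul_sub_le (hΔ n) a) hbound
  have hmain : Tendsto (fun n => ((‖φ (Δ n)‖ ^ 2 : ℝ) : ℂ) * φ a) atTop (𝓝 (φ a)) := by
    simpa using (Complex.continuous_ofReal.tendsto 1 |>.comp hsq).mul_const (φ a)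
  simpa using herr.add hmain

lemma norm_apply_le_limsup (hφ : IsState φ) {Δ : ℕ → A} (hΔ : ∀ n, ‖Δ n‖ ≤ 1)
    (h : Tendsto (fun n => ‖φ (Δ n)‖) atTop (𝓝 1)) (a : A) :
    ‖φ a‖ ≤ limsup (fun n => ‖star (Δ n) * a * Δ n‖) atTop := by
  have hlim := (hφ.tendsto_apply_star_mul_mul hΔ h a).norm
  have hbdd : ∀ n, ‖star (Δ n) * a * Δ n‖ ≤ ‖a‖ := fun n =>
    calc ‖star (Δ n) * a * Δ n‖ ≤ ‖star (Δ n)‖ * ‖a‖ * ‖Δ n‖ := norm_mul₃_le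
      _ ≤ 1 * ‖a‖ * 1 := by rw [norm_star]; gcongr <;> exact hΔ n
      _ = ‖a‖ := by ring
  rw [← hlim.limsup_eq]
  exact limsup_le_limsup (.of_forall fun n => hφ.norm_apply_le_s4 _) hlim.isCoboundedUnder_le
    (isBoundedUnder_of ⟨‖a‖, hbdd⟩)

end IsState

lemma eq_of_apply_one_of_norm_apply_le {A F : Type*} [Ring A] [Algebra ℂ A] [FunLike F A ℂ]
    [LinearMapClass F ℂ A ℂ] {φ ψ : F} (hφ : φ 1 = 1) (hψ : ψ 1 = 1)
    (h : ∀ a, ‖φ a‖ ≤ ‖ψ a‖) : φ = ψ := by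
  refine DFunLike.ext _ _ fun a => ?_
  have hker := h (a - ψ a • 1)
  simp only [map_sub, map_smul, hφ, hψ, smul_eq_mul, mul_one, sub_self, norm_zero,
    norm_le_zero_iff] at hker
  exact sub_eq_zero.mp hker

/-- if `(Δ n)` is a characteristic sequence for `ψ` and `|φ (Δ n)| → 1`, then
`φ (Δ n⋆ * a * Δ n) → φ a` for every `a`, and `φ = ψ`. -/
theorem stmt4 {A : Type*} [CStarAlgebra A]
    (φ ψ : A →L[ℂ] ℂ) (hφ : IsState φ) (hψ : IsState ψ)
    (Δ : ℕ → A) (hΔ : IsCharacteristicSequence ψ Δ)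
    (habs : Tendsto (fun n => ‖φ (Δ n)‖) atTop (nhds 1)) :
    (∀ a : A, Tendsto (fun n => φ (star (Δ n) * a * Δ n)) atTop (nhds (φ a))) ∧ φ = ψ := by
  obtain ⟨hΔ_norm, -, hΔ_limsup⟩ := hΔ
  have hΔ_le : ∀ n, ‖Δ n‖ ≤ 1 := fun n => (hΔ_norm n).le
  exact ⟨hφ.tendsto_apply_star_mul_mul hΔ_le habs,
    eq_of_apply_one_of_norm_apply_le hφ.apply_one hψ.apply_one fun a =>
      (hφ.norm_apply_le_limsup hΔ_le habs a).trans (hΔ_limsup a)⟩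
end

section
/- Let A be a unital C*-algebra and let S ⊂ A be an operator system. Let π : A → B(H) be a unital *-representation and let Π : A → B(H) be a unital completely positive map which agrees with π on S. Let ψ be a state on A which admits a characteristic sequence (Δ_n) with Δ_n ∈ S for all n. Then lim_{n→∞} ‖π(Δ_n)* (Π(a) − π(a)) π(Δ_n)‖ = 0 for every a ∈ A. -/
open Filter Topology
open scoped ComplexOrder InnerProductSpace

/-- A unital completely positive map from `A` to `B(H)`: it is unital, and for every `n`,
the induced map on `n × n` matrices sends positive matrices (those of the form `Nᴴ * N`)
to positive operators on the `n`-fold Hilbert space direct sum of `H`. -/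
def IsUCP {A : Type*} [CStarAlgebra A] {H : Type*} [NormedAddCommGroup H]
    [InnerProductSpace ℂ H] (Φ : A →L[ℂ] (H →L[ℂ] H)) : Prop :=
  Φ 1 = 1 ∧ ∀ (n : ℕ) (M : Matrix (Fin n) (Fin n) A),
    (∃ N : Matrix (Fin n) (Fin n) A, M = N.conjTranspose * N) →
    ∀ ξ : Fin n → H, 0 ≤ ∑ i, ∑ j, ⟪ξ i, Φ (M i j) (ξ j)⟫_ℂ

/-!
Since `Φ` and `π` are unital, replacing `a` by `b = a - ψ(a) • 1` does not change `Φ a - π a`,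
and `ψ b = 0`; hence `π(Δₙ)⋆ π(b) π(Δₙ) = π(Δₙ⋆ b Δₙ)` tends to `0`.
For `Φ b`, write `b = (1 - Δₘ)⋆ b + (b⋆ Δₘ)⋆ (1 - Δₘ) + Δₘ⋆ b Δₘ`. The last term is small once
`m` is large. The first two are bounded by the Cauchy–Schwarz inequality for the completely
positive `Φ` together with
`⟪π(Δₙ)ξ, Φ((1 - Δₘ)⋆(1 - Δₘ)) π(Δₙ)ξ⟫ ≤ 2 ‖Δₙ⋆ (1 - Δₘ) Δₙ‖ ‖ξ‖²`,
which holds because `Φ = π` on `Δₘ, Δₘ⋆ ∈ S`; its right side is small for large `n` as soon as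
`ψ(Δₘ)` is close to `1`. So one first chooses `m`, then `n`.
-/

open ComplexConjugate

lemma Complex.sq_norm_le_re_mul_re_of_forall_nonneg {a b b' c : ℂ} (hc : 0 ≤ c)
    (h : ∀ z : ℂ, 0 ≤ a + z * b + conj z * b' + z * conj z * c) :
    ‖b‖ ^ 2 ≤ a.re * c.re := by
  obtain ⟨ha, ha'⟩ := nonneg_iff.1 (by simpa using h 0)
  obtain ⟨hc, hc'⟩ := nonneg_iff.1 hc
  -- `h 1` and `h I` force `b' = conj b`; then `z = -t * conj b` gives a real quadratic in `t`
  have h1 := (nonneg_iff.1 (h 1)).2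
  have hI := (nonneg_iff.1 (h I)).2
  have hb' : b' = conj b := by
    apply Complex.ext <;>
      simp only [one_mul, map_one, mul_one, add_im, conj_I, neg_mul, mul_neg, I_mul_I, neg_neg,
        mul_im, I_re, zero_mul, I_im, zero_add, neg_im, conj_re, conj_im] at h1 hI ⊢ <;>
      linarith
  have hquad : ∀ t : ℝ, 0 ≤ (‖b‖ ^ 2 * c.re) * (t * t) + (-2 * ‖b‖ ^ 2) * t + a.re := by
    intro t
    have := (nonneg_iff.1 (h (-t * conj b))).1
    rw [hb'] at this
    simp only [neg_mul, map_neg, map_mul, conj_ofReal, RingHomCompTriple.comp_apply,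
      RingHom.id_apply, mul_neg, neg_neg, add_re, neg_re, mul_re, ofReal_re, conj_re, ofReal_im,
      conj_im, zero_mul, neg_zero, sub_zero, mul_im, add_zero, sub_neg_eq_add, neg_add_rev] at this
    rw [Complex.sq_norm, Complex.normSq_apply]
    nlinarith
  have := discrim_le_zero hquad
  unfold discrim at this
  nlinarith [sq_nonneg ‖b‖, mul_nonneg ha hc]

namespace IsUCP

variable {A : Type*} [CStarAlgebra A] {H : Type*} [NormedAddCommGroup H] [InnerProductSpace ℂ H]
  {Φ : A →L[ℂ] (H →L[ℂ] H)}

lemma inner_map_star_mul_self_nonneg (hΦ : IsUCP Φ) (y : A) (u : H) :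
    0 ≤ ⟪u, Φ (star y * y) u⟫_ℂ := by
  simpa using hΦ.2 1 (Matrix.of fun _ _ => star y * y)
    ⟨Matrix.of fun _ _ => y, by ext; simp [Matrix.mul_apply]⟩ fun _ => u

lemma re_inner_map_star_mul_self_nonneg (hΦ : IsUCP Φ) (y : A) (u : H) :
    0 ≤ (⟪u, Φ (star y * y) u⟫_ℂ).re :=
  (Complex.nonneg_iff.1 (hΦ.inner_map_star_mul_self_nonneg y u)).1

lemma sq_norm_inner_map_star_mul_le (hΦ : IsUCP Φ) (x y : A) (u w : H) :
    ‖⟪u, Φ (star x * y) w⟫_ℂ‖ ^ 2 ≤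
      (⟪u, Φ (star x * x) u⟫_ℂ).re * (⟪w, Φ (star y * y) w⟫_ℂ).re := by
  refine Complex.sq_norm_le_re_mul_re_of_forall_nonneg (b' := ⟪w, Φ (star y * x) u⟫_ℂ)
    (hΦ.inner_map_star_mul_self_nonneg y w) fun z => ?_
  have hM : Matrix.of ![![star x * x, star x * y], ![star y * x, star y * y]] =
      (Matrix.of ![![x, y], ![(0 : A), 0]]).conjTranspose * Matrix.of ![![x, y], ![0, 0]] := by
    ext i j
    fin_cases i <;> fin_cases j <;> simp [Matrix.mul_apply, Fin.sum_univ_two]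
  have h := hΦ.2 2 _ ⟨_, hM⟩ ![u, z • w]
  simp only [Fin.sum_univ_two, Matrix.cons_val_zero, Matrix.cons_val_one, Matrix.of_apply,
    map_smul, inner_smul_left, inner_smul_right] at h
  convert h using 1
  ring

lemma norm_inner_map_star_mul_le (hΦ : IsUCP Φ) (x y : A) (u w : H) :
    ‖⟪u, Φ (star x * y) w⟫_ℂ‖ ≤
      √(⟪u, Φ (star x * x) u⟫_ℂ).re * √(⟪w, Φ (star y * y) w⟫_ℂ).re := by
  have hx := hΦ.re_inner_map_star_mul_self_nonneg x u
  rw [← Real.sqrt_mul hx, Real.le_sqrt (norm_nonneg _)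
    (mul_nonneg hx (hΦ.re_inner_map_star_mul_self_nonneg y w))]
  exact hΦ.sq_norm_inner_map_star_mul_le x y u w

lemma re_inner_map_star_mul_self_le (hΦ : IsUCP Φ) (y : A) (u : H) :
    (⟪u, Φ (star y * y) u⟫_ℂ).re ≤ ‖y‖ ^ 2 * ‖u‖ ^ 2 := by
  let := CStarAlgebra.spectralOrder A
  have := CStarAlgebra.spectralOrderedRing A
  obtain ⟨c, hc⟩ := CStarAlgebra.nonneg_iff_eq_star_mul_self.1
    (sub_nonneg.2 (CStarAlgebra.star_mul_le_algebraMap_norm_sq (a := y)))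
  have hy : star y * y = ((‖y‖ ^ 2 : ℝ) : ℂ) • 1 - star c * c := by
    rw [← hc, Algebra.algebraMap_eq_smul_one, Complex.coe_smul, sub_sub_cancel]
  have hpos := hΦ.re_inner_map_star_mul_self_nonneg c u
  rw [hy, map_sub, map_smul, hΦ.1, sub_apply, inner_sub_right, Complex.sub_re,
    smul_apply, one_apply_eq_self, inner_smul_right,
    Complex.re_ofReal_mul, ← RCLike.re_to_complex, inner_self_eq_norm_sq]
  linarith

lemma sqrt_re_inner_map_star_mul_self_le (hΦ : IsUCP Φ) (y : A) (u : H) :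
    √(⟪u, Φ (star y * y) u⟫_ℂ).re ≤ ‖y‖ * ‖u‖ :=
  Real.sqrt_le_iff.2 ⟨by positivity, (hΦ.re_inner_map_star_mul_self_le y u).trans_eq (by ring)⟩

end IsUCP

lemma ContinuousLinearMap.inner_star_mul_mul_apply {𝕜 E : Type*} [RCLike 𝕜] [NormedAddCommGroup E]
    [InnerProductSpace 𝕜 E] [CompleteSpace E] (S T : E →L[𝕜] E) (η ζ : E) :
    ⟪η, (star S * T * S) ζ⟫_𝕜 = ⟪S η, T (S ζ)⟫_𝕜 := by
  rw [mul_apply_eq_comp, mul_apply_eq_comp, star_eq_adjoint, adjoint_inner_right]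

lemma ContinuousLinearMap.opNorm_le_of_norm_inner_le {𝕜 E F : Type*} [RCLike 𝕜]
    [NormedAddCommGroup E] [InnerProductSpace 𝕜 E] [NormedAddCommGroup F] [InnerProductSpace 𝕜 F]
    {T : E →L[𝕜] F} {C : ℝ} (hC : 0 ≤ C) (h : ∀ η ζ, ‖⟪η, T ζ⟫_𝕜‖ ≤ C * ‖η‖ * ‖ζ‖) :
    ‖T‖ ≤ C := by
  refine T.opNorm_le_bound hC fun ζ => ?_
  have hT := h (T ζ) ζ
  rw [inner_self_eq_norm_sq_to_K, norm_pow, RCLike.norm_ofReal, abs_norm] at hT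
  rcases (norm_nonneg (T ζ)).eq_or_lt with h0 | h0
  · rw [← h0]
    positivity
  · nlinarith

section Representation

variable {A : Type*} [CStarAlgebra A] {H : Type*} [NormedAddCommGroup H] [InnerProductSpace ℂ H]
  [CompleteSpace H] {Φ : A →L[ℂ] (H →L[ℂ] H)} (π : A →⋆ₐ[ℂ] (H →L[ℂ] H))

lemma StarAlgHom.norm_apply_apply_le (x : A) (u : H) : ‖π x u‖ ≤ ‖x‖ * ‖u‖ :=
  ((π x).le_opNorm u).trans (by gcongr; exact NonUnitalStarAlgHom.norm_apply_le π x)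

lemma IsUCP.re_inner_map_star_one_sub_mul_one_sub_le (hΦ : IsUCP Φ) {x : A} (hx : ‖x‖ ≤ 1)
    (hΦx : Φ x = π x) (hΦx' : Φ (star x) = π (star x)) (u : H) :
    (⟪u, Φ (star (1 - x) * (1 - x)) u⟫_ℂ).re ≤ 2 * (⟪u, π (1 - x) u⟫_ℂ).re := by
  have hexp : star (1 - x) * (1 - x) = 1 - x - star x + star x * x := by
    rw [star_sub, star_one]
    noncomm_ring
  have hadj : (⟪u, π (star x) u⟫_ℂ).re = (⟪u, π x u⟫_ℂ).re := by
    rw [map_star, ContinuousLinearMap.star_eq_adjoint, ContinuousLinearMap.adjoint_inner_right,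
      ← inner_conj_symm, Complex.conj_re]
  have hxx : (⟪u, Φ (star x * x) u⟫_ℂ).re ≤ ‖u‖ ^ 2 :=
    (hΦ.re_inner_map_star_mul_self_le x u).trans
      (mul_le_of_le_one_left (by positivity) (pow_le_one₀ (norm_nonneg x) hx))
  have huu : (⟪u, u⟫_ℂ).re = ‖u‖ ^ 2 := by rw [← RCLike.re_to_complex, inner_self_eq_norm_sq]
  rw [hexp, map_add, map_sub, map_sub, hΦ.1, hΦx, hΦx', map_sub, map_one]
  simp only [add_apply, sub_apply, one_apply_eq_self,
    inner_add_right, inner_sub_right, Complex.add_re, Complex.sub_re]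
  linarith

lemma IsUCP.re_inner_map_star_one_sub_mul_one_sub_compress_le (hΦ : IsUCP Φ) {x : A}
    (hx : ‖x‖ ≤ 1) (hΦx : Φ x = π x) (hΦx' : Φ (star x) = π (star x)) (d : A) (χ : H) :
    (⟪π d χ, Φ (star (1 - x) * (1 - x)) (π d χ)⟫_ℂ).re ≤ 2 * ‖star d * (1 - x) * d‖ * ‖χ‖ ^ 2 :=
  calc _ ≤ 2 * (⟪π d χ, π (1 - x) (π d χ)⟫_ℂ).re :=
        hΦ.re_inner_map_star_one_sub_mul_one_sub_le π hx hΦx hΦx' _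
    _ = 2 * (⟪χ, π (star d * (1 - x) * d) χ⟫_ℂ).re := by
        rw [map_mul, map_mul, map_star, ContinuousLinearMap.inner_star_mul_mul_apply]
    _ ≤ 2 * (‖χ‖ * (‖star d * (1 - x) * d‖ * ‖χ‖)) := by
        gcongr
        exact (Complex.re_le_norm _).trans ((norm_inner_le_norm (𝕜 := ℂ) _ _).trans
          (mul_le_mul_of_nonneg_left (π.norm_apply_apply_le _ χ) (norm_nonneg χ)))
    _ = 2 * ‖star d * (1 - x) * d‖ * ‖χ‖ ^ 2 := by ring

lemma IsUCP.norm_star_map_mul_map_mul_map_le (hΦ : IsUCP Φ) {x d : A} (hx : ‖x‖ ≤ 1)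
    (hd : ‖d‖ ≤ 1) (hΦx : Φ x = π x) (hΦx' : Φ (star x) = π (star x)) (b : A) :
    ‖star (π d) * Φ b * π d‖ ≤
      2 * ‖b‖ * √(2 * ‖star d * (1 - x) * d‖) + ‖Φ‖ * ‖star x * b * x‖ := by
  set κ := ‖star d * (1 - x) * d‖
  refine ContinuousLinearMap.opNorm_le_of_norm_inner_le (by positivity) fun η ζ => ?_
  have hπd (χ : H) : ‖π d χ‖ ≤ ‖χ‖ :=
    (π.norm_apply_apply_le d χ).trans (mul_le_of_le_one_left (norm_nonneg χ) hd)
  have hdefect (χ : H) : √(⟪π d χ, Φ (star (1 - x) * (1 - x)) (π d χ)⟫_ℂ).re ≤ √(2 * κ) * ‖χ‖ := by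
    rw [← Real.sqrt_sq (norm_nonneg χ), ← Real.sqrt_mul (by positivity)]
    exact Real.sqrt_le_sqrt ((hΦ.re_inner_map_star_one_sub_mul_one_sub_compress_le π hx hΦx hΦx'
      d χ).trans_eq (by ring))
  have hbound (y : A) (χ : H) : √(⟪π d χ, Φ (star y * y) (π d χ)⟫_ℂ).re ≤ ‖y‖ * ‖χ‖ :=
    (hΦ.sqrt_re_inner_map_star_mul_self_le y _).trans (by gcongr; exact hπd χ)
  have hbx : ‖star b * x‖ ≤ ‖b‖ := by
    simpa [norm_star] using
      (norm_mul_le (star b) x).trans (mul_le_of_le_one_right (norm_nonneg _) hx)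
  have hdec : Φ b =
      Φ (star (1 - x) * b) + Φ (star (star b * x) * (1 - x)) + Φ (star x * b * x) := by
    rw [← map_add, ← map_add, star_sub, star_one, star_mul, star_star]
    congr 1
    noncomm_ring
  rw [ContinuousLinearMap.inner_star_mul_mul_apply, hdec, add_apply, add_apply, inner_add_right,
    inner_add_right]
  calc _ ≤ _ := norm_add₃_le
    _ ≤ √(2 * κ) * ‖η‖ * (‖b‖ * ‖ζ‖) + ‖b‖ * ‖η‖ * (√(2 * κ) * ‖ζ‖)
          + ‖η‖ * (‖Φ‖ * ‖star x * b * x‖ * ‖ζ‖) := by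
        gcongr
        · exact (hΦ.norm_inner_map_star_mul_le _ _ _ _).trans
            (mul_le_mul (hdefect η) (hbound b ζ) (Real.sqrt_nonneg _) (by positivity))
        · exact (hΦ.norm_inner_map_star_mul_le _ _ _ _).trans
            (mul_le_mul ((hbound _ η).trans (by gcongr)) (hdefect ζ) (Real.sqrt_nonneg _)
              (by positivity))
        · exact (norm_inner_le_norm _ _).trans (mul_le_mul (hπd η)
            ((Φ.le_opNorm₂ _ _).trans (by gcongr; exact hπd ζ)) (norm_nonneg _) (norm_nonneg _))
    _ = (2 * ‖b‖ * √(2 * κ) + ‖Φ‖ * ‖star x * b * x‖) * ‖η‖ * ‖ζ‖ := by ring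

end Representation

lemma tendsto_zero_of_le_mul_sqrt_add {f c δ : ℕ → ℝ} {κ : ℕ → ℕ → ℝ} {K : ℝ} (hK : 0 ≤ K)
    (hf0 : ∀ n, 0 ≤ f n) (hf : ∀ m n, f n ≤ K * √(κ m n) + c m)
    (hκ : ∀ m θ, δ m < θ → ∀ᶠ n in atTop, κ m n < θ)
    (hδ : Tendsto δ atTop (𝓝 0)) (hc : Tendsto c atTop (𝓝 0)) : Tendsto f atTop (𝓝 0) := by
  refine tendsto_order.2 ⟨fun a ha => .of_forall fun n => ha.trans_le (hf0 n), fun ε hε => ?_⟩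
  obtain ⟨r, hr, hKr⟩ := exists_pos_mul_lt (half_pos hε) K
  obtain ⟨m, hδm, hcm⟩ := ((hδ.eventually (gt_mem_nhds (pow_pos hr 2))).and
    (hc.eventually (gt_mem_nhds (half_pos hε)))).exists
  filter_upwards [hκ m _ hδm] with n hn
  calc f n ≤ K * √(κ m n) + c m := hf m n
    _ ≤ K * r + c m := by gcongr; exact Real.sqrt_le_iff.2 ⟨hr.le, hn.le⟩
    _ < ε := by linarith

namespace IsCharacteristicSequence

variable {A : Type*} [CStarAlgebra A] {ψ : A →L[ℂ] ℂ} {Δ : ℕ → A}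

lemma norm_star_mul_mul_le (hΔ : IsCharacteristicSequence ψ Δ) (c : A) (n : ℕ) :
    ‖star (Δ n) * c * Δ n‖ ≤ ‖c‖ :=
  calc ‖star (Δ n) * c * Δ n‖ ≤ ‖star (Δ n)‖ * ‖c‖ * ‖Δ n‖ := norm_mul₃_le
    _ = ‖c‖ := by rw [norm_star, hΔ.1 n]; ring

lemma eventually_norm_star_mul_mul_lt (hΔ : IsCharacteristicSequence ψ Δ) {c : A} {ε : ℝ}
    (hε : ‖ψ c‖ < ε) : ∀ᶠ n in atTop, ‖star (Δ n) * c * Δ n‖ < ε :=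
  eventually_lt_of_limsup_lt ((hΔ.2.2 c).trans_lt hε)
    (isBoundedUnder_of ⟨‖c‖, hΔ.norm_star_mul_mul_le c⟩)

lemma tendsto_norm_star_mul_mul (hΔ : IsCharacteristicSequence ψ Δ) {c : A} (hc : ψ c = 0) :
    Tendsto (fun n => ‖star (Δ n) * c * Δ n‖) atTop (𝓝 0) :=
  tendsto_order.2 ⟨fun a ha => .of_forall fun n => ha.trans_le (norm_nonneg _),
    fun ε hε => hΔ.eventually_norm_star_mul_mul_lt (by simpa [hc] using hε)⟩

lemma map_one (hΔ : IsCharacteristicSequence ψ Δ) (hψ : IsState ψ) : ψ 1 = 1 := by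
  have : Nontrivial A := nontrivial_of_ne (Δ 0) 0 (norm_ne_zero_iff.1 (by simp [hΔ.1 0]))
  have hge : 1 ≤ ‖ψ 1‖ := by
    simpa [CStarRing.norm_star_mul_self, hΔ.1] using hΔ.2.2 1
  have hle : ‖ψ 1‖ ≤ 1 := by
    simpa [hψ.1] using ψ.le_opNorm 1
  have hpos : 0 ≤ ψ 1 := by simpa using hψ.2 1
  rw [Complex.eq_coe_norm_of_nonneg hpos, le_antisymm hle hge, Complex.ofReal_one]

end IsCharacteristicSequence

theorem IsUCP.tendsto_norm_star_map_mul_map_mul_map {A : Type*} [CStarAlgebra A] {H : Type*}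
    [NormedAddCommGroup H] [InnerProductSpace ℂ H] [CompleteSpace H]
    {Φ : A →L[ℂ] (H →L[ℂ] H)} (hΦ : IsUCP Φ) (π : A →⋆ₐ[ℂ] (H →L[ℂ] H))
    {ψ : A →L[ℂ] ℂ} (hψ : IsState ψ) {Δ : ℕ → A} (hΔ : IsCharacteristicSequence ψ Δ)
    (hΦΔ : ∀ n, Φ (Δ n) = π (Δ n)) (hΦΔ' : ∀ n, Φ (star (Δ n)) = π (star (Δ n)))
    {b : A} (hb : ψ b = 0) :
    Tendsto (fun n => ‖star (π (Δ n)) * Φ b * π (Δ n)‖) atTop (𝓝 0) := by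
  have hψΔ : Tendsto (fun m => ψ (1 - Δ m)) atTop (𝓝 0) := by
    simpa [hΔ.map_one hψ] using (tendsto_const_nhds (x := (1 : ℂ))).sub hΔ.2.1
  refine tendsto_zero_of_le_mul_sqrt_add (δ := fun m => 2 * ‖ψ (1 - Δ m)‖) (by positivity)
    (fun n => norm_nonneg _)
    (fun m n => hΦ.norm_star_map_mul_map_mul_map_le π (hΔ.1 m).le (hΔ.1 n).le (hΦΔ m) (hΦΔ' m) b)
    (fun m θ hθ => (hΔ.eventually_norm_star_mul_mul_lt (c := 1 - Δ m) (ε := θ / 2)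
      (by linarith)).mono fun n hn => by linarith) ?_ ?_
  · simpa using hψΔ.norm.const_mul 2
  · simpa using (hΔ.tendsto_norm_star_mul_mul hb).const_mul ‖Φ‖

theorem stmt12_general {A : Type*} [CStarAlgebra A]
    {H : Type*} [NormedAddCommGroup H] [InnerProductSpace ℂ H] [CompleteSpace H]
    (S : Submodule ℂ A) (hSstar : ∀ x ∈ S, star x ∈ S)
    (π : A →⋆ₐ[ℂ] (H →L[ℂ] H)) (Φ : A →L[ℂ] (H →L[ℂ] H)) (hΦ : IsUCP Φ)
    (hagree : ∀ s ∈ S, Φ s = π s)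
    (ψ : A →L[ℂ] ℂ) (hψ : IsState ψ) (Δ : ℕ → A)
    (hΔ : IsCharacteristicSequence ψ Δ) (hΔS : ∀ n, Δ n ∈ S) :
    ∀ a : A, Tendsto (fun n => ‖star (π (Δ n)) * (Φ a - π a) * π (Δ n)‖) atTop (nhds 0) := by
  intro a
  set b := a - ψ a • 1
  have hb : ψ b = 0 := by simp [b, hΔ.map_one hψ]
  have hsplit (n : ℕ) : star (π (Δ n)) * (Φ a - π a) * π (Δ n) =
      star (π (Δ n)) * Φ b * π (Δ n) - π (star (Δ n) * b * Δ n) := by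
    simp only [b, map_sub, map_smul, hΦ.1, map_mul, map_star, mul_sub, sub_mul,
      smul_mul_assoc, mul_smul_comm, mul_one]
    abel
  have hcompress := hΦ.tendsto_norm_star_map_mul_map_mul_map π hψ hΔ
    (fun n => hagree _ (hΔS n)) (fun n => hagree _ (hSstar _ (hΔS n))) hb
  have hrep : Tendsto (fun n => ‖π (star (Δ n) * b * Δ n)‖) atTop (𝓝 0) :=
    squeeze_zero (fun n => norm_nonneg _) (fun n => NonUnitalStarAlgHom.norm_apply_le π _)
      (hΔ.tendsto_norm_star_mul_mul hb)
  refine squeeze_zero (fun n => norm_nonneg _) (fun n => ?_)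
    (by simpa only [add_zero] using hcompress.add hrep)
  rw [hsplit n]
  exact norm_sub_le _ _

/-- with `π`, `Φ`, `ψ`, `(Δ n)` as in the local hyperrigidity setup,
`‖π (Δ n)⋆ * (Φ a - π a) * π (Δ n)‖ → 0` for every `a ∈ A`. -/
theorem stmt12 {A : Type*} [CStarAlgebra A]
    {H : Type*} [NormedAddCommGroup H] [InnerProductSpace ℂ H] [CompleteSpace H]
    (S : Submodule ℂ A) (hS1 : (1 : A) ∈ S) (hSstar : ∀ x ∈ S, star x ∈ S)
    (π : A →⋆ₐ[ℂ] (H →L[ℂ] H)) (Φ : A →L[ℂ] (H →L[ℂ] H)) (hΦ : IsUCP Φ)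
    (hagree : ∀ s ∈ S, Φ s = π s)
    (ψ : A →L[ℂ] ℂ) (hψ : IsState ψ) (Δ : ℕ → A)
    (hΔ : IsCharacteristicSequence ψ Δ) (hΔS : ∀ n, Δ n ∈ S) :
    ∀ a : A, Tendsto (fun n => ‖star (π (Δ n)) * (Φ a - π a) * π (Δ n)‖) atTop (nhds 0) :=
  stmt12_general S hSstar π Φ hΦ hagree ψ hψ Δ hΔ hΔS
end
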